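/- arXiv:2110.04905 — 2 statements merged into one kernel-verified Lean document; each statement's English description precedes it below -/
import Mathlib

section
/- Let K ⊆ ℝ be a subfield and let L ⊂ ℝ² be a well-rounded full-rank lattice with L ⊆ K². Then the unique x ∈ [0, 2−√3] for which L is similar to M(x) lies in K. -/
open scoped RealInnerProductSpace


noncomputable section

/-- A full-rank lattice in `ℝⁿ`: the `ℤ`-span of an `ℝ`-basis of `ℝⁿ`. -/
def IsFullLattice (n : ℕ) (L : Submodule ℤ (EuclideanSpace ℝ (Fin n))) : Prop :=
  ∃ b : Module.Basis (Fin n) ℝ (EuclideanSpace ℝ (Fin n)), L = Submodule.span ℤ (Set.range b)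

/-- The minimum of a lattice: the least norm of a nonzero lattice vector. -/
def latticeMin (n : ℕ) (L : Submodule ℤ (EuclideanSpace ℝ (Fin n))) : ℝ :=
  sInf {r : ℝ | ∃ x ∈ L, x ≠ 0 ∧ ‖x‖ = r}

/-- The set of minimal vectors of the lattice `L`. -/
def minVecs (n : ℕ) (L : Submodule ℤ (EuclideanSpace ℝ (Fin n))) :
    Set (EuclideanSpace ℝ (Fin n)) :=
  {x | x ∈ L ∧ ‖x‖ = latticeMin n L}

/-- A lattice is well-rounded if its minimal vectors span `ℝⁿ` over `ℝ`. -/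
def IsWellRounded (n : ℕ) (L : Submodule ℤ (EuclideanSpace ℝ (Fin n))) : Prop :=
  Submodule.span ℝ (minVecs n L) = ⊤

/-- Similarity of lattices: `L₂ = α U L₁` for some `α > 0` and orthogonal `U`. -/
def SimilarLat (n : ℕ) (L₁ L₂ : Submodule ℤ (EuclideanSpace ℝ (Fin n))) : Prop :=
  ∃ α : ℝ, 0 < α ∧ ∃ U : EuclideanSpace ℝ (Fin n) ≃ₗᵢ[ℝ] EuclideanSpace ℝ (Fin n),
    (L₂ : Set (EuclideanSpace ℝ (Fin n))) = (fun v => α • U v) '' (L₁ : Set (EuclideanSpace ℝ (Fin n)))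

/-- The cyclic lattice `M(x) = span_ℤ {(1,x), (x,1)}`. -/
def Mlat (x : ℝ) : Submodule ℤ (EuclideanSpace ℝ (Fin 2)) :=
  Submodule.span ℤ {(WithLp.toLp 2 ![1, x] : EuclideanSpace ℝ (Fin 2)), (WithLp.toLp 2 ![x, 1] : EuclideanSpace ℝ (Fin 2))}



def d2 (v w : EuclideanSpace ℝ (Fin 2)) : ℝ := v 0 * w 1 - v 1 * w 0

lemma inner_two (v w : EuclideanSpace ℝ (Fin 2)) : ⟪v, w⟫ = v 0 * w 0 + v 1 * w 1 := by
  simp [PiLp.inner_apply, Fin.sum_univ_two, RCLike.inner_apply, conj_trivial]; ring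

lemma decomp (v : EuclideanSpace ℝ (Fin 2)) :
    v = v 0 • (WithLp.toLp 2 ![1,0] : EuclideanSpace ℝ (Fin 2)) + v 1 • (WithLp.toLp 2 ![0,1] : EuclideanSpace ℝ (Fin 2)) := by
  ext j; fin_cases j <;> simp [PiLp.add_apply, PiLp.smul_apply]

lemma d2_map (U : EuclideanSpace ℝ (Fin 2) ≃ₗᵢ[ℝ] EuclideanSpace ℝ (Fin 2))
    (v w : EuclideanSpace ℝ (Fin 2)) :
    d2 (U v) (U w) = d2 (U (WithLp.toLp 2 ![1,0])) (U (WithLp.toLp 2 ![0,1])) * d2 v w := by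
  have hv := congrArg U (decomp v)
  have hw := congrArg U (decomp w)
  rw [map_add, map_smul, map_smul] at hv hw
  rw [hv, hw]
  simp only [d2, PiLp.add_apply, PiLp.smul_apply, smul_eq_mul]
  ring

lemma eps_sq (U : EuclideanSpace ℝ (Fin 2) ≃ₗᵢ[ℝ] EuclideanSpace ℝ (Fin 2)) :
    (d2 (U (WithLp.toLp 2 ![1,0])) (U (WithLp.toLp 2 ![0,1])))^2 = 1 := by
  set a := U (WithLp.toLp 2 ![1,0]) with ha
  set b := U (WithLp.toLp 2 ![0,1]) with hb
  have h1 : a 0 * a 0 + a 1 * a 1 = 1 := by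
    rw [← inner_two a a, ha, U.inner_map_map, inner_two]; norm_num
  have h2 : b 0 * b 0 + b 1 * b 1 = 1 := by
    rw [← inner_two b b, hb, U.inner_map_map, inner_two]; norm_num
  have h3 : a 0 * b 0 + a 1 * b 1 = 0 := by
    rw [← inner_two a b, ha, hb, U.inner_map_map, inner_two]; norm_num
  unfold d2; nlinarith [h1, h2, h3]

lemma d2_smul (α : ℝ) (v w : EuclideanSpace ℝ (Fin 2)) :
    d2 (α • v) (α • w) = α^2 * d2 v w := by
  simp only [d2, PiLp.smul_apply, smul_eq_mul]; ring

/-- If a well-rounded full-rank planar lattice `L` is defined over a subfield `K ⊆ ℝ`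
(i.e. all coordinates of all its vectors lie in `K`), then the unique `x ∈ [0, 2 - √3]`
with `L ∼ M(x)` lies in `K`. -/
theorem wellRounded_definedOver_x_mem
    (K : Subfield ℝ) (L : Submodule ℤ (EuclideanSpace ℝ (Fin 2)))
    (hL : IsFullLattice 2 L) (hWR : IsWellRounded 2 L)
    (hK : ∀ v ∈ L, ∀ i : Fin 2, v i ∈ K) :
    ∀ x : ℝ, x ∈ Set.Icc (0 : ℝ) (2 - Real.sqrt 3) → SimilarLat 2 L (Mlat x) → x ∈ K := by
  intro x _ hsim
  obtain ⟨α, hα, U, hset⟩ := hsim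
  set m₁ : EuclideanSpace ℝ (Fin 2) := WithLp.toLp 2 ![1, x] with hm₁
  set m₂ : EuclideanSpace ℝ (Fin 2) := WithLp.toLp 2 ![x, 1] with hm₂
  have hm₁mem : m₁ ∈ (Mlat x : Set (EuclideanSpace ℝ (Fin 2))) :=
    Submodule.subset_span (Set.mem_insert _ _)
  have hm₂mem : m₂ ∈ (Mlat x : Set (EuclideanSpace ℝ (Fin 2))) :=
    Submodule.subset_span (Set.mem_insert_of_mem _ rfl)
  rw [hset] at hm₁mem hm₂mem
  obtain ⟨v₁, hv₁L, hv₁⟩ := hm₁mem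
  obtain ⟨v₂, hv₂L, hv₂⟩ := hm₂mem
  simp only at hv₁ hv₂
  -- inner product equations
  have inner_eq : ∀ v w : EuclideanSpace ℝ (Fin 2),
      ⟪α • U v, α • U w⟫ = α^2 * ⟪v, w⟫ := by
    intro v w
    rw [real_inner_smul_left, real_inner_smul_right, U.inner_map_map]; ring
  have h1 : 1 + x^2 = α^2 * (v₁ 0 * v₁ 0 + v₁ 1 * v₁ 1) := by
    have := inner_eq v₁ v₁
    rw [hv₁, inner_two, inner_two] at this
    simp only [hm₁, PiLp.toLp_apply, Matrix.cons_val_zero, Matrix.cons_val_one, Matrix.head_cons] at this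
    linarith [this]
  have h2 : 2 * x = α^2 * (v₁ 0 * v₂ 0 + v₁ 1 * v₂ 1) := by
    have := inner_eq v₁ v₂
    rw [hv₁, hv₂, inner_two, inner_two] at this
    simp only [hm₁, hm₂, PiLp.toLp_apply, Matrix.cons_val_zero, Matrix.cons_val_one, Matrix.head_cons] at this
    linarith [this]
  -- determinant equation
  set ε := d2 (U (WithLp.toLp 2 ![1,0])) (U (WithLp.toLp 2 ![0,1])) with hε
  have h3 : 1 - x^2 = α^2 * (ε * (v₁ 0 * v₂ 1 - v₁ 1 * v₂ 0)) := by
    have : d2 m₁ m₂ = α^2 * (ε * d2 v₁ v₂) := by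
      rw [← hv₁, ← hv₂, d2_smul, d2_map]
    simp only [d2, hm₁, hm₂, PiLp.toLp_apply, Matrix.cons_val_zero, Matrix.cons_val_one, Matrix.head_cons] at this
    rw [show (1:ℝ) - x^2 = 1*1 - x*x by ring, this]
  -- membership facts
  have hA : (v₁ 0 * v₁ 0 + v₁ 1 * v₁ 1 : ℝ) ∈ K :=
    K.add_mem (K.mul_mem (hK v₁ hv₁L 0) (hK v₁ hv₁L 0)) (K.mul_mem (hK v₁ hv₁L 1) (hK v₁ hv₁L 1))
  have hB : (v₁ 0 * v₂ 0 + v₁ 1 * v₂ 1 : ℝ) ∈ K :=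
    K.add_mem (K.mul_mem (hK v₁ hv₁L 0) (hK v₂ hv₂L 0)) (K.mul_mem (hK v₁ hv₁L 1) (hK v₂ hv₂L 1))
  have hD : (ε * (v₁ 0 * v₂ 1 - v₁ 1 * v₂ 0) : ℝ) ∈ K := by
    have hDK : (v₁ 0 * v₂ 1 - v₁ 1 * v₂ 0 : ℝ) ∈ K :=
      K.sub_mem (K.mul_mem (hK v₁ hv₁L 0) (hK v₂ hv₂L 1)) (K.mul_mem (hK v₁ hv₁L 1) (hK v₂ hv₂L 0))
    have hc : ε = 1 ∨ ε = -1 := by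
      apply mul_self_eq_one_iff.mp
      rw [← sq, hε]; exact eps_sq U
    rcases hc with h | h
    · rw [h]; simpa using hDK
    · rw [h]; simpa using K.neg_mem hDK
  set A := v₁ 0 * v₁ 0 + v₁ 1 * v₁ 1
  set B := v₁ 0 * v₂ 0 + v₁ 1 * v₂ 1
  set D := ε * (v₁ 0 * v₂ 1 - v₁ 1 * v₂ 0)
  have hα2 : (α:ℝ)^2 ≠ 0 := pow_ne_zero 2 (ne_of_gt hα)
  have hs : α^2 * (A + D) = 2 := by linarith [h1, h3]
  have hne : A + D ≠ 0 := by
    intro h; rw [h, mul_zero] at hs; norm_num at hs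
  have hx : x = B / (A + D) := by
    rw [eq_div_iff hne]
    apply mul_left_cancel₀ hα2
    linear_combination x * hs + h2
  rw [hx]
  exact K.div_mem hB (K.add_mem hA hD)

end
end

section
/- Let L ⊂ ℝ² be a well-rounded full-rank lattice with basis a₁ = (a₁₁, a₁₂), a₂ = (a₂₁, a₂₂) consisting of minimal vectors (‖a₁‖ = ‖a₂‖ = |L|), and suppose (a₁₁ + a₂₂, a₁₂ + a₂₁) ≠ (0,0). Then L is similar to its cyclic approximation P_A(L) = span_ℤ{ ((a₁₁+a₂₂)/2, (a₁₂+a₂₁)/2), ((a₁₂+a₂₁)/2, (a₁₁+a₂₂)/2) }. -/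
noncomputable section

open RealInnerProductSpace

/-- A well-rounded planar lattice with a basis of minimal vectors is similar to its
cyclic approximation `P_A(L)`. -/
theorem wellRounded_similar_cyclicApproximation
    (L : Submodule ℤ (EuclideanSpace ℝ (Fin 2)))
    (a₁ a₂ : EuclideanSpace ℝ (Fin 2))
    (hind : LinearIndependent ℝ ![a₁, a₂])
    (hspan : L = Submodule.span ℤ {a₁, a₂})
    (hWR : IsWellRounded 2 L)
    (h₁ : a₁ ∈ minVecs 2 L) (h₂ : a₂ ∈ minVecs 2 L)
    (hnz : ¬(a₁ 0 + a₂ 1 = 0 ∧ a₁ 1 + a₂ 0 = 0)) :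
    SimilarLat 2 L (Submodule.span ℤ
      {(WithLp.toLp 2 ![(a₁ 0 + a₂ 1) / 2, (a₁ 1 + a₂ 0) / 2] : EuclideanSpace ℝ (Fin 2)),
       (WithLp.toLp 2 ![(a₁ 1 + a₂ 0) / 2, (a₁ 0 + a₂ 1) / 2] : EuclideanSpace ℝ (Fin 2))}) := by
  classical
  set m : ℝ := ‖a₁‖ with hm
  have hna2 : ‖a₂‖ = m := by rw [h₂.2, ← h₁.2]
  have ha1ne : a₁ ≠ 0 := by
    have := hind.ne_zero 0; simpa using this
  have hmpos : 0 < m := by rw [hm]; exact norm_pos_iff.mpr ha1ne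
  have hX : 0 < (a₁ 0 + a₂ 1) ^ 2 + (a₁ 1 + a₂ 0) ^ 2 := by
    rcases not_and_or.mp hnz with h | h
    · have h2 : (a₁ 0 + a₂ 1) ^ 2 ≠ 0 := pow_ne_zero 2 h
      have := lt_of_le_of_ne (sq_nonneg (a₁ 0 + a₂ 1)) (Ne.symm h2)
      nlinarith [sq_nonneg (a₁ 1 + a₂ 0)]
    · have h2 : (a₁ 1 + a₂ 0) ^ 2 ≠ 0 := pow_ne_zero 2 h
      have := lt_of_le_of_ne (sq_nonneg (a₁ 1 + a₂ 0)) (Ne.symm h2)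
      nlinarith [sq_nonneg (a₁ 0 + a₂ 1)]
  have ha : a₁ 0 * a₁ 0 + a₁ 1 * a₁ 1 = m ^ 2 := by
    have h := real_inner_self_eq_norm_sq a₁
    simp only [PiLp.inner_apply, Fin.sum_univ_two, RCLike.inner_apply, conj_trivial] at h
    rw [← hm] at h
    linarith
  have hc : a₂ 0 * a₂ 0 + a₂ 1 * a₂ 1 = m ^ 2 := by
    have h := real_inner_self_eq_norm_sq a₂
    simp only [PiLp.inner_apply, Fin.sum_univ_two, RCLike.inner_apply, conj_trivial, hna2] at h
    linarith
  set α : ℝ := Real.sqrt ((a₁ 0 + a₂ 1) ^ 2 + (a₁ 1 + a₂ 0) ^ 2) / (2 * m) with hα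
  have hαpos : 0 < α := div_pos (Real.sqrt_pos.mpr hX) (by linarith)
  have hαne : α ≠ 0 := ne_of_gt hαpos
  have hα2' : 4 * m ^ 2 * α ^ 2 = (a₁ 0 + a₂ 1) ^ 2 + (a₁ 1 + a₂ 0) ^ 2 := by
    rw [hα, div_pow, Real.sq_sqrt hX.le]
    field_simp
    ring
  set P : EuclideanSpace ℝ (Fin 2) := WithLp.toLp 2 ![(a₁ 0 + a₂ 1) / 2, (a₁ 1 + a₂ 0) / 2] with hP
  set Q : EuclideanSpace ℝ (Fin 2) := WithLp.toLp 2 ![(a₁ 1 + a₂ 0) / 2, (a₁ 0 + a₂ 1) / 2] with hQ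
  have hcard : Fintype.card (Fin 2) = Module.finrank ℝ (EuclideanSpace ℝ (Fin 2)) := by simp
  set B := basisOfLinearIndependentOfCardEqFinrank hind hcard with hB
  have hB0 : B 0 = a₁ := by
    rw [hB, coe_basisOfLinearIndependentOfCardEqFinrank]; simp
  have hB1 : B 1 = a₂ := by
    rw [hB, coe_basisOfLinearIndependentOfCardEqFinrank]; simp
  set f : EuclideanSpace ℝ (Fin 2) →ₗ[ℝ] EuclideanSpace ℝ (Fin 2) :=
    B.constr ℝ ![α⁻¹ • P, α⁻¹ • Q] with hf
  have hf0 : f a₁ = α⁻¹ • P := by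
    rw [← hB0, hf, Module.Basis.constr_basis]; simp
  have hf1 : f a₂ = α⁻¹ • Q := by
    rw [← hB1, hf, Module.Basis.constr_basis]; simp
  have lem : ∀ Z W : ℝ, α ^ 2 * W = Z → α⁻¹ * (α⁻¹ * Z) = W := by
    intro Z W h
    rw [← h]
    field_simp
  have h4M : (4 * m ^ 2 : ℝ) ≠ 0 := by positivity
  have hPP : ⟪P, P⟫ = (a₁ 0 + a₂ 1) / 2 * ((a₁ 0 + a₂ 1) / 2)
      + (a₁ 1 + a₂ 0) / 2 * ((a₁ 1 + a₂ 0) / 2) := by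
    rw [hP]; simp only [PiLp.inner_apply, Fin.sum_univ_two, RCLike.inner_apply, conj_trivial, PiLp.toLp_apply, Matrix.cons_val_zero, Matrix.cons_val_one] <;> ring
  have hQQ : ⟪Q, Q⟫ = (a₁ 1 + a₂ 0) / 2 * ((a₁ 1 + a₂ 0) / 2)
      + (a₁ 0 + a₂ 1) / 2 * ((a₁ 0 + a₂ 1) / 2) := by
    rw [hQ]; simp only [PiLp.inner_apply, Fin.sum_univ_two, RCLike.inner_apply, conj_trivial, PiLp.toLp_apply, Matrix.cons_val_zero, Matrix.cons_val_one] <;> ring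
  have hPQ : ⟪P, Q⟫ = (a₁ 0 + a₂ 1) / 2 * ((a₁ 1 + a₂ 0) / 2)
      + (a₁ 1 + a₂ 0) / 2 * ((a₁ 0 + a₂ 1) / 2) := by
    rw [hP, hQ]; simp only [PiLp.inner_apply, Fin.sum_univ_two, RCLike.inner_apply, conj_trivial, PiLp.toLp_apply, Matrix.cons_val_zero, Matrix.cons_val_one] <;> ring
  have haa : ⟪a₁, a₁⟫ = a₁ 0 * a₁ 0 + a₁ 1 * a₁ 1 := by
    simp only [PiLp.inner_apply, Fin.sum_univ_two, RCLike.inner_apply, conj_trivial, PiLp.toLp_apply, Matrix.cons_val_zero, Matrix.cons_val_one] <;> ring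
  have hcc : ⟪a₂, a₂⟫ = a₂ 0 * a₂ 0 + a₂ 1 * a₂ 1 := by
    simp only [PiLp.inner_apply, Fin.sum_univ_two, RCLike.inner_apply, conj_trivial, PiLp.toLp_apply, Matrix.cons_val_zero, Matrix.cons_val_one] <;> ring
  have hac : ⟪a₁, a₂⟫ = a₁ 0 * a₂ 0 + a₁ 1 * a₂ 1 := by
    simp only [PiLp.inner_apply, Fin.sum_univ_two, RCLike.inner_apply, conj_trivial, PiLp.toLp_apply, Matrix.cons_val_zero, Matrix.cons_val_one] <;> ring
  have hg11 : ⟪f a₁, f a₁⟫ = ⟪a₁, a₁⟫ := by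
    rw [hf0, real_inner_smul_left, real_inner_smul_right, hPP, haa]
    exact lem _ _ (by linear_combination α ^ 2 * ha + (1 / 4) * hα2')
  have hg22 : ⟪f a₂, f a₂⟫ = ⟪a₂, a₂⟫ := by
    rw [hf1, real_inner_smul_left, real_inner_smul_right, hQQ, hcc]
    exact lem _ _ (by linear_combination α ^ 2 * hc + (1 / 4) * hα2')
  have hg12 : ⟪f a₁, f a₂⟫ = ⟪a₁, a₂⟫ := by
    rw [hf0, hf1, real_inner_smul_left, real_inner_smul_right, hPQ, hac]
    refine lem _ _ ?_
    have key : 4 * m ^ 2 * (α ^ 2 * (a₁ 0 * a₂ 0 + a₁ 1 * a₂ 1)) =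
        4 * m ^ 2 * ((a₁ 0 + a₂ 1) / 2 * ((a₁ 1 + a₂ 0) / 2)
          + (a₁ 1 + a₂ 0) / 2 * ((a₁ 0 + a₂ 1) / 2)) := by
      linear_combination (a₁ 0 * a₂ 0 + a₁ 1 * a₂ 1) * hα2'
        + (a₁ 0 * a₂ 0 + a₁ 1 * a₂ 1 + 2 * (a₂ 0 * a₂ 1)) * ha
        + (a₁ 0 * a₂ 0 + a₁ 1 * a₂ 1 + 2 * (a₁ 0 * a₁ 1)) * hc
    exact mul_left_cancel₀ h4M key
  have hg21 : ⟪f a₂, f a₁⟫ = ⟪a₂, a₁⟫ := by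
    calc ⟪f a₂, f a₁⟫ = ⟪f a₁, f a₂⟫ := real_inner_comm (f a₁) (f a₂)
    _ = ⟪a₁, a₂⟫ := hg12
    _ = ⟪a₂, a₁⟫ := real_inner_comm a₂ a₁
  have hgram : ∀ x y : EuclideanSpace ℝ (Fin 2), ⟪f x, f y⟫ = ⟪x, y⟫ := by
    intro x y
    obtain ⟨u, v, rfl⟩ : ∃ u v : ℝ, x = u • a₁ + v • a₂ := by
      refine ⟨B.repr x 0, B.repr x 1, ?_⟩
      have h := B.sum_repr x
      rw [Fin.sum_univ_two, hB0, hB1] at h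
      exact h.symm
    obtain ⟨u', v', rfl⟩ : ∃ u' v' : ℝ, y = u' • a₁ + v' • a₂ := by
      refine ⟨B.repr y 0, B.repr y 1, ?_⟩
      have h := B.sum_repr y
      rw [Fin.sum_univ_two, hB0, hB1] at h
      exact h.symm
    simp only [map_add, map_smul, inner_add_left, inner_add_right,
      real_inner_smul_left, real_inner_smul_right, hg11, hg12, hg21, hg22]
  refine ⟨α, hαpos, (f.isometryOfInner hgram).toLinearIsometryEquiv rfl, ?_⟩
  have hgfun : (fun v => α • ((f.isometryOfInner hgram).toLinearIsometryEquiv rfl) v)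
      = ⇑((α • f).restrictScalars ℤ) := by
    funext v
    simp [LinearIsometry.coe_toLinearIsometryEquiv, LinearMap.coe_isometryOfInner]
  have hga1 : ((α • f).restrictScalars ℤ) a₁ = P := by
    simp only [LinearMap.coe_restrictScalars, LinearMap.smul_apply]
    rw [hf0, smul_smul, mul_inv_cancel₀ hαne, one_smul]
  have hga2 : ((α • f).restrictScalars ℤ) a₂ = Q := by
    simp only [LinearMap.coe_restrictScalars, LinearMap.smul_apply]
    rw [hf1, smul_smul, mul_inv_cancel₀ hαne, one_smul]
  rw [hgfun, hspan, ← Submodule.map_coe ((α • f).restrictScalars ℤ),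
    Submodule.map_span, Set.image_pair, hga1, hga2]

end
end
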